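/- arXiv:math-ph/0605052 — 5 statements merged into one kernel-verified Lean document; each statement's English description precedes it below -/
import Mathlib

section
/- Let w, w_* ∈ [-1,1], let γ ∈ (0,1/2), let P : [0,1] → [0,1], and let η ∈ ℝ satisfy |η| ≤ 1 - γ. Then the post-interaction opinion with diffusion function D(|w|) = 1 - |w|, namely w' = w - γ P(|w|)(w - w_*) + η(1 - |w|), satisfies |w'| ≤ 1. -/
open Set

/-- With diffusion function `D(|w|) = 1 - |w|` and noise `|η| ≤ 1 - γ`, the
post-interaction opinion stays in `[-1,1]`. -/
theorem opinion_bound_linear_diffusion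
    (w ws γ η : ℝ) (P : ℝ → ℝ)
    (hw : w ∈ Icc (-1:ℝ) 1) (hws : ws ∈ Icc (-1:ℝ) 1)
    (hγ : γ ∈ Ioo (0:ℝ) (1/2))
    (hP : ∀ x ∈ Icc (0:ℝ) 1, P x ∈ Icc (0:ℝ) 1)
    (hη : |η| ≤ 1 - γ) :
    |w - γ * P |w| * (w - ws) + η * (1 - |w|)| ≤ 1 := by
  have hw1 : |w| ≤ 1 := abs_le.mpr hw
  obtain ⟨hq0, hq1⟩ := hP |w| ⟨abs_nonneg w, hw1⟩
  obtain ⟨hη1, hη2⟩ := abs_le.mp hη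
  obtain ⟨hγ0, hγ1⟩ := hγ
  obtain ⟨hws1, hws2⟩ := hws
  have ha0 : 0 ≤ |w| := abs_nonneg w
  have haw : w ≤ |w| := le_abs_self w
  have hanw : -w ≤ |w| := neg_le_abs w
  have hγq : γ * P |w| ≤ 1 := by nlinarith
  rw [abs_le]
  constructor
  · nlinarith [mul_nonneg (sub_nonneg.mpr hγq) (by linarith : (0:ℝ) ≤ |w| + w),
      mul_nonneg (mul_nonneg hγ0.le hq0) (by linarith : (0:ℝ) ≤ 1 + ws),
      mul_nonneg (by linarith : (0:ℝ) ≤ 1 - γ + η) (by linarith : (0:ℝ) ≤ 1 - |w|),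
      mul_nonneg (mul_nonneg hγ0.le (by linarith : (0:ℝ) ≤ 1 - P |w|))
        (by linarith : (0:ℝ) ≤ 1 - |w|)]
  · nlinarith [mul_nonneg (sub_nonneg.mpr hγq) (by linarith : (0:ℝ) ≤ |w| - w),
      mul_nonneg (mul_nonneg hγ0.le hq0) (by linarith : (0:ℝ) ≤ 1 - ws),
      mul_nonneg (by linarith : (0:ℝ) ≤ 1 - γ - η) (by linarith : (0:ℝ) ≤ 1 - |w|),
      mul_nonneg (mul_nonneg hγ0.le (by linarith : (0:ℝ) ≤ 1 - P |w|))
        (by linarith : (0:ℝ) ≤ 1 - |w|)]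
end

section
/- Let w, w_* ∈ [-1,1], let γ ∈ (0,1/2), let P : [0,1] → [0,1], and let η ∈ ℝ satisfy |η|(1 + |w|) ≤ 1 - γ. Then the post-interaction opinion with diffusion function D(|w|) = 1 - w², namely w' = w - γ P(|w|)(w - w_*) + η(1 - w²), satisfies |w'| ≤ 1. -/
open Set

/-- With diffusion function `D(|w|) = 1 - w²` and noise satisfying
`|η|(1+|w|) ≤ 1 - γ`, the post-interaction opinion stays in `[-1,1]`. -/
theorem opinion_bound_quadratic_diffusion
    (w ws γ η : ℝ) (P : ℝ → ℝ)
    (hw : w ∈ Icc (-1:ℝ) 1) (hws : ws ∈ Icc (-1:ℝ) 1)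
    (hγ : γ ∈ Ioo (0:ℝ) (1/2))
    (hP : ∀ x ∈ Icc (0:ℝ) 1, P x ∈ Icc (0:ℝ) 1)
    (hη : |η| * (1 + |w|) ≤ 1 - γ) :
    |w - γ * P |w| * (w - ws) + η * (1 - w^2)| ≤ 1 := by
  obtain ⟨hw1, hw2⟩ := hw
  obtain ⟨hs1, hs2⟩ := hws
  obtain ⟨hγ1, hγ2⟩ := hγ
  have habs : |w| ∈ Icc (0:ℝ) 1 := ⟨abs_nonneg _, abs_le.2 ⟨hw1, hw2⟩⟩
  obtain ⟨hp0, hp1⟩ := hP |w| habs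
  set p := P |w|
  have ha1 : η ≤ |η| := le_abs_self η
  have ha2 : -η ≤ |η| := neg_le_abs η
  have ha0 : (0:ℝ) ≤ |η| := abs_nonneg η
  have hwabs1 : w ≤ |w| := le_abs_self w
  have hwabs2 : -w ≤ |w| := neg_le_abs w
  -- key bounds
  have key1 : η * (1 + w) ≤ 1 - γ := by nlinarith
  have key2 : -(1 - γ) ≤ η * (1 - w) := by nlinarith
  rw [abs_le]
  constructor
  · nlinarith [mul_nonneg (mul_nonneg hγ1.le (sub_nonneg.2 hp1)) (by linarith : (0:ℝ) ≤ 1 + w),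
      mul_nonneg (mul_nonneg hγ1.le hp0) (by linarith : (0:ℝ) ≤ 1 + ws),
      mul_nonneg (by linarith : (0:ℝ) ≤ 1 + w) (by linarith : (0:ℝ) ≤ 1 - γ + η * (1 - w))]
  · nlinarith [mul_nonneg (mul_nonneg hγ1.le (sub_nonneg.2 hp1)) (by linarith : (0:ℝ) ≤ 1 - w),
      mul_nonneg (mul_nonneg hγ1.le hp0) (by linarith : (0:ℝ) ≤ 1 - ws),
      mul_nonneg (by linarith : (0:ℝ) ≤ 1 - w) (by linarith : (0:ℝ) ≤ 1 - γ - η * (1 + w))]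
end

section
/- Let w, w_* ∈ [-1,1], let γ ∈ (0,1/2), let p > 0, let P : [0,1] → [0,1], and let η ∈ ℝ satisfy |η| ≤ a_γ, where a_γ = (1-γ) γ^{p/2} / √(1 + γ^p). Then the post-interaction opinion with diffusion function D(w) = √(max(1 - (1+γ^p) w², 0)), namely w' = w - γ P(|w|)(w - w_*) + η √(max(1 - (1+γ^p) w², 0)), satisfies |w'| ≤ 1. -/
open Set

/-- With diffusion function `D(w) = √((1 - (1+γ^p) w²)₊)` and noise bounded by
`a_γ = (1-γ) γ^{p/2} / √(1+γ^p)`, the post-interaction opinion stays in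
`[-1,1]`. -/
theorem opinion_bound_truncated_sqrt_diffusion
    (w ws γ η p : ℝ) (P : ℝ → ℝ)
    (hw : w ∈ Icc (-1:ℝ) 1) (hws : ws ∈ Icc (-1:ℝ) 1)
    (hγ : γ ∈ Ioo (0:ℝ) (1/2)) (hp : 0 < p)
    (hP : ∀ x ∈ Icc (0:ℝ) 1, P x ∈ Icc (0:ℝ) 1)
    (hη : |η| ≤ (1 - γ) * γ ^ (p/2) / Real.sqrt (1 + γ ^ p)) :
    |w - γ * P |w| * (w - ws) + η * Real.sqrt (max (1 - (1 + γ ^ p) * w^2) 0)| ≤ 1 := by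
  obtain ⟨hw1, hw2⟩ := hw
  obtain ⟨hws1, hws2⟩ := hws
  obtain ⟨hγ0, hγ1⟩ := hγ
  have hs : |w| ≤ 1 := abs_le.2 ⟨hw1, hw2⟩
  obtain ⟨hP0, hP1⟩ := hP |w| ⟨abs_nonneg w, hs⟩
  have hq : (0:ℝ) < γ ^ p := Real.rpow_pos_of_pos hγ0 p
  set q := γ ^ p with hqdef
  have h1q : (0:ℝ) < 1 + q := by linarith
  set M := max (1 - (1 + q) * w ^ 2) 0 with hM
  have hM0 : 0 ≤ M := le_max_right _ _
  set D := Real.sqrt M with hD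
  have hD0 : 0 ≤ D := Real.sqrt_nonneg _
  have hγp2 : γ ^ (p / 2) = Real.sqrt q := by
    rw [hqdef, Real.sqrt_eq_rpow, ← Real.rpow_mul hγ0.le, mul_one_div]
  -- key inner inequality
  have hinner : q * M / (1 + q) ≤ (1 - |w|) ^ 2 := by
    rw [div_le_iff₀ h1q]
    rcases le_or_gt (1 - (1 + q) * w ^ 2) 0 with h | h
    · have hMeq : M = 0 := max_eq_right h
      rw [hMeq]
      have : (0:ℝ) ≤ (1 - |w|) ^ 2 * (1 + q) := by positivity
      linarith
    · have hMeq : M = 1 - (1 + q) * w ^ 2 := max_eq_left h.le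
      rw [hMeq, ← sq_abs w]
      nlinarith [sq_nonneg ((1 + q) * |w| - 1)]
  have hkey : |η| * D ≤ (1 - γ) * (1 - |w|) := by
    have hA : |η| ≤ (1 - γ) * Real.sqrt q / Real.sqrt (1 + q) := by
      rw [← hγp2]; exact hη
    have hABD : |η| * D ≤ ((1 - γ) * Real.sqrt q / Real.sqrt (1 + q)) * D :=
      mul_le_mul_of_nonneg_right hA hD0
    have hcal : ((1 - γ) * Real.sqrt q / Real.sqrt (1 + q)) * D
        = (1 - γ) * Real.sqrt (q * M / (1 + q)) := by
      rw [Real.sqrt_div (by positivity) (1 + q), Real.sqrt_mul hq.le, hD]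
      ring
    have hsq : Real.sqrt (q * M / (1 + q)) ≤ 1 - |w| := by
      calc Real.sqrt (q * M / (1 + q)) ≤ Real.sqrt ((1 - |w|) ^ 2) :=
            Real.sqrt_le_sqrt hinner
        _ = 1 - |w| := Real.sqrt_sq (by linarith)
    calc |η| * D ≤ ((1 - γ) * Real.sqrt q / Real.sqrt (1 + q)) * D := hABD
      _ = (1 - γ) * Real.sqrt (q * M / (1 + q)) := hcal
      _ ≤ (1 - γ) * (1 - |w|) := by
          apply mul_le_mul_of_nonneg_left hsq (by linarith)
  have hc1 : γ * P |w| ≤ γ := by nlinarith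
  have hc0 : 0 ≤ γ * P |w| := mul_nonneg hγ0.le hP0
  have h1 : |w - γ * P |w| * (w - ws)| ≤ (1 - γ * P |w|) * |w| + γ * P |w| := by
    have heq : w - γ * P |w| * (w - ws) = (1 - γ * P |w|) * w + (γ * P |w|) * ws := by
      ring
    rw [heq]
    calc |(1 - γ * P |w|) * w + (γ * P |w|) * ws|
        ≤ |(1 - γ * P |w|) * w| + |(γ * P |w|) * ws| := abs_add_le _ _
      _ = (1 - γ * P |w|) * |w| + (γ * P |w|) * |ws| := by
          rw [abs_mul, abs_mul, abs_of_nonneg (by linarith), abs_of_nonneg hc0]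
      _ ≤ (1 - γ * P |w|) * |w| + γ * P |w| := by
          have : |ws| ≤ 1 := abs_le.2 ⟨hws1, hws2⟩
          nlinarith
  calc |w - γ * P |w| * (w - ws) + η * D|
      ≤ |w - γ * P |w| * (w - ws)| + |η * D| := abs_add_le _ _
    _ = |w - γ * P |w| * (w - ws)| + |η| * D := by rw [abs_mul, abs_of_nonneg hD0]
    _ ≤ ((1 - γ * P |w|) * |w| + γ * P |w|) + (1 - γ) * (1 - |w|) :=
        add_le_add h1 hkey
    _ ≤ 1 := by nlinarith [mul_nonneg (sub_nonneg.2 hs) (sub_nonneg.2 hc1)]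
end

section
/- Let λ > 0 and m ∈ (-1,1). The function g(w) = (1+w)^{-2 + m/(2λ)} (1-w)^{-2 - m/(2λ)} exp( -(1 - m w)/(λ(1-w²)) ) is differentiable on (-1,1) and satisfies on (-1,1) the stationary Fokker-Planck equation (λ/2) d/dw [ (1-w²)² g(w) ] + (w - m) g(w) = 0. -/
/-!
With `a = m/(2λ)`, the flux `(1-w²)² g` is `h(w) = (1+w)^a (1-w)^(-a) exp(-(1-mw)/(λ(1-w²)))`,
whose logarithmic derivative is `a/(1+w) + a/(1-w) + (m + mw² - 2w)/(λ(1-w²)²) = -2(w-m)/(λ(1-w²)²)`.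
Hence `(λ/2) h' = -(w-m) h/(1-w²)² = -(w-m) g`.
-/

open Set Filter Topology

lemma one_sub_sq_ne_zero {x : ℝ} (hx : x ∈ Ioo (-1 : ℝ) 1) : 1 - x ^ 2 ≠ 0 := by
  nlinarith [hx.1, hx.2]

lemma hasDerivAt_one_add_rpow_mul_one_sub_rpow (p q : ℝ) {x : ℝ} (hx : x ∈ Ioo (-1 : ℝ) 1) :
    HasDerivAt (fun y => (1 + y) ^ p * (1 - y) ^ q)
      ((1 + x) ^ p * (1 - x) ^ q * (p / (1 + x) - q / (1 - x))) x := by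
  have hpos : 0 < 1 + x := by linarith [hx.1]
  have hneg : 0 < 1 - x := by linarith [hx.2]
  have hp := ((hasDerivAt_id x).const_add 1).rpow_const (p := p) (Or.inl hpos.ne')
  have hq := ((hasDerivAt_id x).const_sub 1).rpow_const (p := q) (Or.inl hneg.ne')
  refine (hp.mul hq).congr_deriv ?_
  simp only [id]
  rw [Real.rpow_sub_one hpos.ne', Real.rpow_sub_one hneg.ne']
  field_simp
  ring

lemma hasDerivAt_div_one_sub_sq {l : ℝ} (m : ℝ) (hl : l ≠ 0) {x : ℝ} (hx : 1 - x ^ 2 ≠ 0) :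
    HasDerivAt (fun y => -(1 - m * y) / (l * (1 - y ^ 2)))
      ((m + m * x ^ 2 - 2 * x) / (l * (1 - x ^ 2) ^ 2)) x := by
  have hnum := (((hasDerivAt_id x).const_mul m).const_sub 1).neg
  have hden := ((hasDerivAt_pow 2 x).const_sub 1).const_mul l
  refine (hnum.div hden (mul_ne_zero hl hx)).congr_deriv ?_
  simp only [id, Pi.neg_apply]
  field_simp
  ring

lemma one_add_rpow_mul_one_sub_rpow_sub_two (a : ℝ) {x : ℝ} (hx : x ∈ Ioo (-1 : ℝ) 1) :
    (1 + x) ^ (-2 + a) * (1 - x) ^ (-2 - a) = (1 + x) ^ a * (1 - x) ^ (-a) / (1 - x ^ 2) ^ 2 := by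
  have hpos : 1 + x ≠ 0 := by linarith [hx.1]
  have hneg : 1 - x ≠ 0 := by linarith [hx.2]
  rw [show -2 + a = a - (2 : ℕ) by push_cast; ring, show -2 - a = -a - (2 : ℕ) by push_cast; ring,
    Real.rpow_sub_natCast hpos, Real.rpow_sub_natCast hneg,
    show 1 - x ^ 2 = (1 + x) * (1 - x) by ring]
  field_simp

theorem stationary_solution_quadratic_diffusion_general
    (l m : ℝ) (hl : 0 < l)
    (g : ℝ → ℝ)
    (hg : ∀ w, g w =
      (1 + w) ^ (-2 + m / (2*l)) * (1 - w) ^ (-2 - m / (2*l)) *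
        Real.exp (-(1 - m*w) / (l * (1 - w^2)))) :
    DifferentiableOn ℝ g (Ioo (-1:ℝ) 1) ∧
      ∀ w ∈ Ioo (-1:ℝ) 1,
        HasDerivAt (fun w => (l/2) * ((1 - w^2)^2 * g w)) (-((w - m) * g w)) w := by
  have hderiv (p q : ℝ) {w : ℝ} (hw : w ∈ Ioo (-1 : ℝ) 1) :=
    (hasDerivAt_one_add_rpow_mul_one_sub_rpow p q hw).mul
      (hasDerivAt_div_one_sub_sq m hl.ne' (one_sub_sq_ne_zero hw)).exp
  refine ⟨fun w hw => ?_, fun w hw => ?_⟩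
  · rw [funext hg]
    exact (hderiv _ _ hw).differentiableAt.differentiableWithinAt
  · have hflux : (fun w => (l / 2) * ((1 - w ^ 2) ^ 2 * g w)) =ᶠ[𝓝 w]
        fun w => (l / 2) * ((1 + w) ^ (m / (2 * l)) * (1 - w) ^ (-(m / (2 * l))) *
          Real.exp (-(1 - m * w) / (l * (1 - w ^ 2)))) := by
      filter_upwards [isOpen_Ioo.mem_nhds hw] with x hx
      rw [hg, one_add_rpow_mul_one_sub_rpow_sub_two _ hx]
      field_simp [one_sub_sq_ne_zero hx]
    refine (((hderiv _ _ hw).const_mul (l / 2)).congr_of_eventuallyEq hflux).congr_deriv ?_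
    have hpos : 1 + w ≠ 0 := by linarith [hw.1]
    have hneg : 1 - w ≠ 0 := by linarith [hw.2]
    rw [hg, one_add_rpow_mul_one_sub_rpow_sub_two _ hw]
    field_simp [one_sub_sq_ne_zero hw]
    ring

/-- The stationary solution for `D(|w|) = 1 - w²`: the explicit density `g`
is differentiable on `(-1,1)` and solves
`(λ/2) d/dw[(1-w²)² g] + (w-m) g = 0` there. -/
theorem stationary_solution_quadratic_diffusion
    (l m : ℝ) (hl : 0 < l) (hm : m ∈ Ioo (-1:ℝ) 1)
    (g : ℝ → ℝ)
    (hg : ∀ w, g w =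
      (1 + w) ^ (-2 + m / (2*l)) * (1 - w) ^ (-2 - m / (2*l)) *
        Real.exp (-(1 - m*w) / (l * (1 - w^2)))) :
    DifferentiableOn ℝ g (Ioo (-1:ℝ) 1) ∧
      ∀ w ∈ Ioo (-1:ℝ) 1,
        HasDerivAt (fun w => (l/2) * ((1 - w^2)^2 * g w)) (-((w - m) * g w)) w :=
  stationary_solution_quadratic_diffusion_general l m hl g hg
end

section
/- Let λ > 0 and m ∈ (-1,1). The function g(w) = (1-w)^{-2 - 2/λ} exp( -2(1-m)/(λ(1-w)) ) is differentiable on (0,1) and satisfies on (0,1) the stationary Fokker-Planck equation (λ/2) d/dw [ (1-w)² g(w) ] + (w - m) g(w) = 0. -/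
open Set Real

/-! With `u = 1 - w` and `g = u ^ a * exp (c / u)`, one has `g' = (c / u - a) / u * g`, hence
`d/dw (u² g) = (c - (a + 2) u) g`. For `a = -2 - 2/λ` and `c = -2(1 - m)/λ` the factor
`(λ/2)(c - (a + 2) u)` collapses to `-(1 - m) + u = m - w`. -/

theorem hasDerivAt_rpow_mul_exp_div (a c : ℝ) {u : ℝ} (hu : u ≠ 0) :
    HasDerivAt (fun u : ℝ => u ^ a * exp (c / u))
      ((a - c / u) / u * (u ^ a * exp (c / u))) u := by
  have hpow : HasDerivAt (fun u : ℝ => u ^ a) (a * u ^ (a - 1)) u :=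
    hasDerivAt_rpow_const (Or.inl hu)
  have hquot : HasDerivAt (fun u => c / u) (-c / u ^ 2) u := by
    simpa [div_eq_mul_inv] using (hasDerivAt_inv hu).const_mul c
  refine (hpow.mul hquot.exp).congr_deriv ?_
  rw [rpow_sub_one hu]
  field_simp
  ring

theorem hasDerivAt_one_sub_rpow_mul_exp_div (a c : ℝ) {w : ℝ} (hw : w ≠ 1) :
    HasDerivAt (fun w : ℝ => (1 - w) ^ a * exp (c / (1 - w)))
      ((c / (1 - w) - a) / (1 - w) * ((1 - w) ^ a * exp (c / (1 - w)))) w := by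
  have hu : 1 - w ≠ 0 := sub_ne_zero.2 hw.symm
  have hsub : HasDerivAt (fun w : ℝ => 1 - w) (-1) w := (hasDerivAt_id' w).const_sub 1
  exact ((hasDerivAt_rpow_mul_exp_div a c hu).comp w hsub).congr_deriv (by ring)

theorem hasDerivAt_one_sub_sq_mul_rpow_mul_exp_div (a c : ℝ) {w : ℝ} (hw : w ≠ 1) :
    HasDerivAt (fun w : ℝ => (1 - w) ^ 2 * ((1 - w) ^ a * exp (c / (1 - w))))
      ((c - (a + 2) * (1 - w)) * ((1 - w) ^ a * exp (c / (1 - w)))) w := by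
  have hu : 1 - w ≠ 0 := sub_ne_zero.2 hw.symm
  have hsq : HasDerivAt (fun w : ℝ => (1 - w) ^ 2) (2 * (1 - w) * -1) w := by
    simpa using ((hasDerivAt_id' w).const_sub 1).fun_pow 2
  refine (hsq.mul (hasDerivAt_one_sub_rpow_mul_exp_div a c hw)).congr_deriv ?_
  field_simp
  ring

theorem stationary_solution_linear_diffusion_general
    (l m : ℝ) (hl : 0 < l)
    (g : ℝ → ℝ)
    (hg : ∀ w, g w =
      (1 - w) ^ (-2 - 2/l) * Real.exp (-2*(1 - m) / (l * (1 - w)))) :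
    DifferentiableOn ℝ g (Ioo (0:ℝ) 1) ∧
      ∀ w ∈ Ioo (0:ℝ) 1,
        HasDerivAt (fun w => (l/2) * ((1 - w)^2 * g w)) (-((w - m) * g w)) w := by
  obtain rfl : g = fun w => (1 - w) ^ (-2 - 2/l) * exp (-2 * (1 - m) / l / (1 - w)) := by
    funext w
    rw [hg, div_div]
  refine ⟨fun w hw => ?_, fun w hw => ?_⟩
  · exact (hasDerivAt_one_sub_rpow_mul_exp_div _ _ hw.2.ne).differentiableAt.differentiableWithinAt
  · have hflux :=
      hasDerivAt_one_sub_sq_mul_rpow_mul_exp_div (-2 - 2 / l) (-2 * (1 - m) / l) hw.2.ne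
    refine (hflux.const_mul (l / 2)).congr_deriv ?_
    field_simp
    ring

/-- The stationary solution for `D(|w|) = 1 - |w|` on `(0,1)`: the explicit
density `g` is differentiable on `(0,1)` and solves
`(λ/2) d/dw[(1-w)² g] + (w-m) g = 0` there. -/
theorem stationary_solution_linear_diffusion
    (l m : ℝ) (hl : 0 < l) (hm : m ∈ Ioo (-1:ℝ) 1)
    (g : ℝ → ℝ)
    (hg : ∀ w, g w =
      (1 - w) ^ (-2 - 2/l) * Real.exp (-2*(1 - m) / (l * (1 - w)))) :
    DifferentiableOn ℝ g (Ioo (0:ℝ) 1) ∧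
      ∀ w ∈ Ioo (0:ℝ) 1,
        HasDerivAt (fun w => (l/2) * ((1 - w)^2 * g w)) (-((w - m) * g w)) w :=
  stationary_solution_linear_diffusion_general l m hl g hg
end
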